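/- arXiv:0807.3404 — 3 statements merged into one kernel-verified Lean document; each statement's English description precedes it below -/
import Mathlib

section
/- Let $G$ be as above and $H \leq G$ a subgroup containing at least two distinct involutions. Then $H$ is generated by two involutions $f_k$ and $f_{k+d}$ (for suitable $k \in \mathbb{Z}$, $d \in \mathbb{N}$), and $H$ is isomorphic to the infinite dihedral group. -/
/-!
Every element of `G` is a shear `!![1, 0; j, 1]` or a reflection `f_j`, and
`f_i f_j = !![1, 0; i - j, 1]`. The shears in `H` form a subgroup `dℤ` of `ℤ`, with `d ≠ 0`
because `H` contains two distinct reflections. If `f_k ∈ H`, then for `u = f_k`, `v = f_{k+d}`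
every element of `H` is `(v u)^n` or `(v u)^n u`, so `H = ⟨u, v⟩`. Finally, two involutions
`u, v` whose product has infinite order generate a copy of `ℤ₂ * ℤ₂`: the words of the free
product have the same normal forms `(v u)^n`, `(v u)^n u`, and none of them maps to `1`.
-/

section InvolutionPair

variable {K : Type*} [Group K] {x y : K}

theorem inv_eq_self_of_sq_eq_one (hx : x ^ 2 = 1) : x⁻¹ = x :=
  inv_eq_of_mul_eq_one_right (by rw [← sq, hx])

def involutionHom (x : K) (hx : x ^ 2 = 1) : Multiplicative (ZMod 2) →* K :=
  AddMonoidHom.toMultiplicativeLeft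
    (ZMod.lift 2 ⟨zmultiplesHom (Additive K) (Additive.ofMul x), by
      rw [zmultiplesHom_apply, natCast_zsmul, ← ofMul_pow, hx, ofMul_one]⟩)

@[simp]
theorem involutionHom_ofAdd_one (hx : x ^ 2 = 1) :
    involutionHom x hx (Multiplicative.ofAdd 1) = x := by
  change Additive.toMul (ZMod.lift 2 _ ((1 : ℤ) : ZMod 2)) = x
  rw [ZMod.lift_coe]
  simp

theorem mul_zpow_eq_zpow_neg_mul (hx : x ^ 2 = 1) (hy : y ^ 2 = 1) (n : ℤ) :
    x * (y * x) ^ n = (y * x) ^ (-n) * x := by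
  have hconj : x * (y * x) * x⁻¹ = (y * x)⁻¹ := by
    rw [mul_inv_rev, inv_eq_self_of_sq_eq_one hx, inv_eq_self_of_sq_eq_one hy, mul_assoc,
      mul_assoc, ← sq, hx, mul_one]
  rw [zpow_neg, ← inv_zpow, ← hconj, conj_zpow, inv_mul_cancel_right]

theorem mem_closure_pair_iff (hx : x ^ 2 = 1) (hy : y ^ 2 = 1) {g : K} :
    g ∈ Subgroup.closure {x, y} ↔ ∃ n : ℤ, g = (y * x) ^ n ∨ g = (y * x) ^ n * x := by
  have hxK : x ∈ Subgroup.closure {x, y} := Subgroup.subset_closure (by simp)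
  have hyK : y ∈ Subgroup.closure {x, y} := Subgroup.subset_closure (by simp)
  refine ⟨fun hg => ?_, ?_⟩
  · set P : K → Prop := fun g => ∃ n : ℤ, g = (y * x) ^ n ∨ g = (y * x) ^ n * x
    have hPx : ∀ g, P g → P (x * g) := by
      rintro _ ⟨n, rfl | rfl⟩
      · exact ⟨-n, .inr (mul_zpow_eq_zpow_neg_mul hx hy n)⟩
      · refine ⟨-n, .inl ?_⟩
        rw [← mul_assoc, mul_zpow_eq_zpow_neg_mul hx hy, mul_assoc, ← sq, hx, mul_one]
    have hPyx : ∀ g, P g → P (y * x * g) := by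
      rintro _ ⟨n, rfl | rfl⟩
      · exact ⟨1 + n, .inl (zpow_one_add _ n).symm⟩
      · exact ⟨1 + n, .inr (by rw [zpow_one_add, mul_assoc (y * x)])⟩
    have hPy : ∀ g, P g → P (y * g) := fun g hg => by
      have := hPyx _ (hPx g hg)
      rwa [mul_assoc, ← mul_assoc x, ← sq, hx, one_mul] at this
    have hP : ∀ s ∈ ({x, y} : Set K), ∀ g, P g → P (s * g) := by
      rintro s (rfl | rfl)
      exacts [hPx, hPy]
    induction hg using Subgroup.closure_induction_left with
    | one => exact ⟨0, .inl (zpow_zero _).symm⟩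
    | mul_left s hs g _ ih => exact hP s hs g ih
    | inv_mul_cancel s hs g _ ih =>
      rcases hs with rfl | rfl
      · rw [inv_eq_self_of_sq_eq_one hx]; exact hPx g ih
      · rw [inv_eq_self_of_sq_eq_one hy]; exact hPy g ih
  · rintro ⟨n, rfl | rfl⟩
    · exact zpow_mem (mul_mem hyK hxK) n
    · exact mul_mem (zpow_mem (mul_mem hyK hxK) n) hxK

theorem zpow_mul_ne_one_of_not_isOfFinOrder (hx : x ^ 2 = 1) (hy : y ^ 2 = 1)
    (hyx : ¬IsOfFinOrder (y * x)) (n : ℤ) : (y * x) ^ n * x ≠ 1 := by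
  intro h
  -- `x` would be a power of `y * x`, hence commute with it, yet conjugation by `x` inverts it.
  have hcomm : Commute x (y * x) := by
    have := (Commute.self_zpow (y * x) (-n)).symm
    rwa [zpow_neg, ← eq_inv_of_mul_eq_one_right h] at this
  have hinv : y * x = (y * x)⁻¹ := by
    have := mul_zpow_eq_zpow_neg_mul hx hy 1
    rw [zpow_one, hcomm.eq, zpow_neg_one] at this
    exact mul_right_cancel this
  refine hyx (isOfFinOrder_iff_pow_eq_one.2 ⟨2, two_pos, ?_⟩)
  rw [sq]
  nth_rewrite 1 [hinv]
  exact inv_mul_cancel _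

abbrev InfiniteDihedral := Monoid.Coprod (Multiplicative (ZMod 2)) (Multiplicative (ZMod 2))

open Monoid.Coprod in
theorem InfiniteDihedral.closure_eq_top :
    Subgroup.closure {inl (.ofAdd 1), inr (.ofAdd 1)} = (⊤ : Subgroup InfiniteDihedral) := by
  have hZ2 : ∀ m : Multiplicative (ZMod 2), m = 1 ∨ m = .ofAdd 1 := by decide
  rw [eq_top_iff, ← closure_range_inl_union_inr, Subgroup.closure_le]
  rintro _ (⟨m, rfl⟩ | ⟨m, rfl⟩) <;> rcases hZ2 m with rfl | rfl
  all_goals simp only [SetLike.mem_coe, map_one, one_mem]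
  all_goals exact Subgroup.subset_closure (by simp)

def liftInvolutions (hx : x ^ 2 = 1) (hy : y ^ 2 = 1) : InfiniteDihedral →* K :=
  Monoid.Coprod.lift (involutionHom x hx) (involutionHom y hy)

@[simp]
theorem liftInvolutions_inl (hx : x ^ 2 = 1) (hy : y ^ 2 = 1) :
    liftInvolutions hx hy (Monoid.Coprod.inl (.ofAdd 1)) = x := by
  simp [liftInvolutions]

@[simp]
theorem liftInvolutions_inr (hx : x ^ 2 = 1) (hy : y ^ 2 = 1) :
    liftInvolutions hx hy (Monoid.Coprod.inr (.ofAdd 1)) = y := by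
  simp [liftInvolutions]

theorem range_liftInvolutions (hx : x ^ 2 = 1) (hy : y ^ 2 = 1) :
    (liftInvolutions hx hy).range = Subgroup.closure {x, y} := by
  rw [MonoidHom.range_eq_map, ← InfiniteDihedral.closure_eq_top, MonoidHom.map_closure,
    Set.image_pair, liftInvolutions_inl, liftInvolutions_inr]

open Monoid.Coprod in
theorem liftInvolutions_injective (hx : x ^ 2 = 1) (hy : y ^ 2 = 1)
    (hyx : ¬IsOfFinOrder (y * x)) : Function.Injective (liftInvolutions hx hy) := by
  rw [injective_iff_map_eq_one]
  intro g hg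
  have h2 : (Multiplicative.ofAdd (1 : ZMod 2)) ^ 2 = 1 := by decide
  have hX : (inl (.ofAdd 1) : InfiniteDihedral) ^ 2 = 1 := by rw [← map_pow, h2, map_one]
  have hY : (inr (.ofAdd 1) : InfiniteDihedral) ^ 2 = 1 := by rw [← map_pow, h2, map_one]
  obtain ⟨n, rfl | rfl⟩ := (mem_closure_pair_iff hX hY).1
    (InfiniteDihedral.closure_eq_top ▸ Subgroup.mem_top g) <;>
    simp only [map_zpow, map_mul, liftInvolutions_inl, liftInvolutions_inr] at hg
  · obtain rfl : n = 0 := by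
      by_contra hn
      exact hyx (isOfFinOrder_iff_zpow_eq_one.2 ⟨n, hn, hg⟩)
    exact zpow_zero _
  · exact absurd hg (zpow_mul_ne_one_of_not_isOfFinOrder hx hy hyx n)

noncomputable def closurePairMulEquiv (hx : x ^ 2 = 1) (hy : y ^ 2 = 1)
    (hyx : ¬IsOfFinOrder (y * x)) : Subgroup.closure {x, y} ≃* InfiniteDihedral :=
  ((MonoidHom.ofInjective (liftInvolutions_injective hx hy hyx)).trans
    (MulEquiv.subgroupCongr (range_liftInvolutions hx hy))).symm

end InvolutionPair

def lowerShear (j : ℤ) : GL (Fin 2) ℤ :=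
  ⟨!![1, 0; j, 1], !![1, 0; -j, 1], by simp [Matrix.one_fin_two], by simp [Matrix.one_fin_two]⟩

def lowerReflection (j : ℤ) : GL (Fin 2) ℤ :=
  ⟨!![1, 0; j, -1], !![1, 0; j, -1], by simp [Matrix.one_fin_two], by simp [Matrix.one_fin_two]⟩

@[simp]
theorem val_lowerShear (j : ℤ) : (lowerShear j : Matrix (Fin 2) (Fin 2) ℤ) = !![1, 0; j, 1] :=
  rfl

@[simp]
theorem val_lowerReflection (j : ℤ) :
    (lowerReflection j : Matrix (Fin 2) (Fin 2) ℤ) = !![1, 0; j, -1] :=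
  rfl

theorem lowerShear_mul_lowerShear (i j : ℤ) : lowerShear i * lowerShear j = lowerShear (i + j) :=
  Units.ext <| by simp

theorem lowerShear_mul_lowerReflection (i j : ℤ) :
    lowerShear i * lowerReflection j = lowerReflection (i + j) :=
  Units.ext <| by simp

theorem lowerReflection_mul_lowerReflection (i j : ℤ) :
    lowerReflection i * lowerReflection j = lowerShear (i - j) :=
  Units.ext <| by simp [sub_eq_add_neg]

theorem lowerShear_eq_one_iff {j : ℤ} : lowerShear j = 1 ↔ j = 0 := by
  simp [Units.ext_iff, Matrix.one_fin_two]

@[simp]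
theorem lowerShear_zero : lowerShear 0 = 1 :=
  lowerShear_eq_one_iff.2 rfl

theorem lowerReflection_ne_one (j : ℤ) : lowerReflection j ≠ 1 := by
  simp [Units.ext_iff, Matrix.one_fin_two]

theorem lowerReflection_add_mul_lowerReflection (k j : ℤ) :
    lowerReflection (k + j) * lowerReflection k = lowerShear j := by
  rw [lowerReflection_mul_lowerReflection, add_sub_cancel_left]

theorem lowerReflection_sq (j : ℤ) : lowerReflection j ^ 2 = 1 := by
  rw [sq, lowerReflection_mul_lowerReflection, sub_self, lowerShear_zero]

theorem lowerShear_inv (j : ℤ) : (lowerShear j)⁻¹ = lowerShear (-j) :=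
  inv_eq_of_mul_eq_one_right <| by rw [lowerShear_mul_lowerShear, add_neg_cancel, lowerShear_zero]

theorem lowerShear_zpow (j n : ℤ) : lowerShear j ^ n = lowerShear (n * j) := by
  induction n using Int.induction_on with
  | zero => simp
  | succ m ih => rw [zpow_add_one, ih, lowerShear_mul_lowerShear]; ring_nf
  | pred m ih =>
    rw [zpow_sub_one, ih, lowerShear_inv, lowerShear_mul_lowerShear]
    ring_nf

theorem not_isOfFinOrder_lowerShear {j : ℤ} (hj : j ≠ 0) : ¬IsOfFinOrder (lowerShear j) := by
  rw [isOfFinOrder_iff_zpow_eq_one]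
  rintro ⟨n, hn, h⟩
  rw [lowerShear_zpow, lowerShear_eq_one_iff] at h
  exact mul_ne_zero hn hj h

theorem AddSubgroup.exists_natCast_dvd_iff_mem_int (T : AddSubgroup ℤ) :
    ∃ d : ℕ, ∀ j, j ∈ T ↔ (d : ℤ) ∣ j := by
  obtain ⟨a, rfl⟩ := Int.subgroup_cyclic T
  refine ⟨a.natAbs, fun j => ?_⟩
  rw [← AddSubgroup.zmultiples_eq_closure, ← Int.zmultiples_natAbs, Int.mem_zmultiples_iff]

section LowerTriangularSubgroup

variable {H : Subgroup (GL (Fin 2) ℤ)}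

def lowerShearSubgroup (H : Subgroup (GL (Fin 2) ℤ)) : AddSubgroup ℤ where
  carrier := {j | lowerShear j ∈ H}
  zero_mem' := show lowerShear 0 ∈ H by simp [one_mem]
  add_mem' {i j} (hi : lowerShear i ∈ H) (hj : lowerShear j ∈ H) :=
    show lowerShear (i + j) ∈ H from lowerShear_mul_lowerShear i j ▸ mul_mem hi hj
  neg_mem' {j} (hj : lowerShear j ∈ H) :=
    show lowerShear (-j) ∈ H from lowerShear_inv j ▸ inv_mem hj

theorem mem_lowerShearSubgroup {j : ℤ} : j ∈ lowerShearSubgroup H ↔ lowerShear j ∈ H :=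
  Iff.rfl

theorem exists_eq_lowerReflection_of_sq_eq_one {u : GL (Fin 2) ℤ}
    (hu : ∃ j, u = lowerShear j ∨ u = lowerReflection j) (hu2 : u ^ 2 = 1) (hu1 : u ≠ 1) :
    ∃ j, u = lowerReflection j := by
  obtain ⟨j, rfl | rfl⟩ := hu
  · rw [sq, lowerShear_mul_lowerShear, lowerShear_eq_one_iff] at hu2
    exact absurd (lowerShear_eq_one_iff.2 (by omega)) hu1
  · exact ⟨j, rfl⟩

theorem eq_closure_lowerReflection_pair
    (hH : ∀ u ∈ H, ∃ j, u = lowerShear j ∨ u = lowerReflection j) {k : ℤ} {d : ℕ}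
    (hk : lowerReflection k ∈ H) (hd : ∀ j, lowerShear j ∈ H ↔ (d : ℤ) ∣ j) :
    H = Subgroup.closure {lowerReflection k, lowerReflection (k + d)} := by
  have hkd : lowerReflection (k + d) ∈ H := by
    rw [add_comm, ← lowerShear_mul_lowerReflection]
    exact mul_mem ((hd d).2 dvd_rfl) hk
  refine le_antisymm (fun u hu => ?_) ((Subgroup.closure_le H).2 (Set.insert_subset hk
    (Set.singleton_subset_iff.2 hkd)))
  rw [mem_closure_pair_iff (lowerReflection_sq k) (lowerReflection_sq _),
    lowerReflection_add_mul_lowerReflection]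
  obtain ⟨j, rfl | rfl⟩ := hH u hu
  · obtain ⟨n, rfl⟩ := (hd j).1 hu
    exact ⟨n, .inl (by rw [lowerShear_zpow, mul_comm])⟩
  · obtain ⟨n, hn⟩ := (hd (j - k)).1 <| by
      rw [← lowerReflection_mul_lowerReflection]
      exact mul_mem hu hk
    refine ⟨n, .inr ?_⟩
    rw [lowerShear_zpow, lowerShear_mul_lowerReflection, mul_comm, ← hn, sub_add_cancel]

end LowerTriangularSubgroup

/-- let `H ≤ G = { !![1,0;k,±1] } ⊂ GL(2,ℤ)` contain at least two distinct
involutions. Then `H` is generated by two involutions `f_k`, `f_{k+d}` for suitable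
`k : ℤ`, `d ≥ 1`, and `H` is isomorphic to the infinite dihedral group `ℤ₂ * ℤ₂`. -/
theorem stmt_12 (H : Subgroup (Matrix (Fin 2) (Fin 2) ℤ)ˣ)
    (hG : ∀ u ∈ H, ∃ j : ℤ, (u : Matrix (Fin 2) (Fin 2) ℤ) = !![1, 0; j, 1] ∨
      (u : Matrix (Fin 2) (Fin 2) ℤ) = !![1, 0; j, -1])
    (h2 : ∃ u ∈ H, ∃ v ∈ H, u ≠ v ∧ u ^ 2 = 1 ∧ v ^ 2 = 1 ∧ u ≠ 1 ∧ v ≠ 1) :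
    ∃ k : ℤ, ∃ d : ℕ, 1 ≤ d ∧
      ∃ u v : (Matrix (Fin 2) (Fin 2) ℤ)ˣ, u ∈ H ∧ v ∈ H ∧
        (u : Matrix (Fin 2) (Fin 2) ℤ) = !![1, 0; k, -1] ∧
        (v : Matrix (Fin 2) (Fin 2) ℤ) = !![1, 0; k + (d : ℤ), -1] ∧
        u ^ 2 = 1 ∧ u ≠ 1 ∧ v ^ 2 = 1 ∧ v ≠ 1 ∧
        H = Subgroup.closure {u, v} ∧
        Nonempty (H ≃* Monoid.Coprod (Multiplicative (ZMod 2)) (Multiplicative (ZMod 2))) := by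
  have hH : ∀ u ∈ H, ∃ j, u = lowerShear j ∨ u = lowerReflection j := fun u hu => by
    obtain ⟨j, h | h⟩ := hG u hu
    exacts [⟨j, .inl (Units.ext h)⟩, ⟨j, .inr (Units.ext h)⟩]
  obtain ⟨_, hu, _, hv, huv, hu2, hv2, hu1, hv1⟩ := h2
  obtain ⟨k, rfl⟩ := exists_eq_lowerReflection_of_sq_eq_one (hH _ hu) hu2 hu1
  obtain ⟨l, rfl⟩ := exists_eq_lowerReflection_of_sq_eq_one (hH _ hv) hv2 hv1
  obtain ⟨d, hd⟩ := (lowerShearSubgroup H).exists_natCast_dvd_iff_mem_int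
  have hd0 : d ≠ 0 := by
    rintro rfl
    have := (hd (k - l)).1 (by
      rw [mem_lowerShearSubgroup, ← lowerReflection_mul_lowerReflection]
      exact mul_mem hu hv)
    rw [Nat.cast_zero, zero_dvd_iff, sub_eq_zero] at this
    exact huv (this ▸ rfl)
  have hHkd := eq_closure_lowerReflection_pair hH hu hd
  refine ⟨k, d, Nat.one_le_iff_ne_zero.2 hd0, _, _, hu,
    hHkd ▸ Subgroup.subset_closure (by simp), rfl, rfl, lowerReflection_sq k,
    lowerReflection_ne_one k, lowerReflection_sq _, lowerReflection_ne_one _, hHkd,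
    ⟨(MulEquiv.subgroupCongr hHkd).trans (closurePairMulEquiv (lowerReflection_sq k)
      (lowerReflection_sq _) ?_)⟩⟩
  rw [lowerReflection_add_mul_lowerReflection]
  exact not_isOfFinOrder_lowerShear (by exact_mod_cast hd0)
end

section
/- Let $\eta = (a, c)$ and $\sigma = (b, d)$ be vectors in $\mathbb{Z}^2$ with $\gcd(a,c) = 1$ and $\gcd(b,d) = 1$, and suppose the matrix $f = A \begin{pmatrix} 1 & 0 \\ 0 & -1 \end{pmatrix} A^{-1}$ has integer entries, where $A = \begin{pmatrix} a & b \\ c & d \end{pmatrix}$ with $m = \det A \neq 0$. Then $m$ divides $2$, i.e., $|\det A| \in \{1, 2\}$. -/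
theorem IsCoprime.dvd_of_dvd_mul_of_dvd_mul {R : Type*} [CommSemiring R] {k n x y : R}
    (hxy : IsCoprime x y) (hx : k ∣ n * x) (hy : k ∣ n * y) : k ∣ n := by
  obtain ⟨u, v, huv⟩ := hxy
  have hn : n = u * (n * x) + v * (n * y) := by
    calc n = n * (u * x + v * y) := by rw [huv, mul_one]
      _ = u * (n * x) + v * (n * y) := by ring
  rw [hn]
  exact dvd_add (hx.mul_left u) (hy.mul_left v)

theorem stmt_13_general (a b c d : ℤ) (ha : Int.gcd a c = 1) (hb : Int.gcd b d = 1)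
    (m : ℤ)
    (h1 : m ∣ 2 * b * c) (h2 : m ∣ 2 * a * b) (h3 : m ∣ 2 * c * d) (h4 : m ∣ 2 * a * d) :
    m ∣ 2 := by
  have hbd := Int.isCoprime_iff_gcd_eq_one.mpr hb
  have h2a : m ∣ 2 * a := hbd.dvd_of_dvd_mul_of_dvd_mul h2 h4
  have h2c : m ∣ 2 * c := hbd.dvd_of_dvd_mul_of_dvd_mul (by rwa [mul_right_comm]) h3
  exact (Int.isCoprime_iff_gcd_eq_one.mpr ha).dvd_of_dvd_mul_of_dvd_mul h2a h2c

/-- let `η = (a,c)`, `σ = (b,d)` be primitive vectors in `ℤ²`, and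
`m = det !![a,b;c,d] ≠ 0`. If the matrix `f = A * !![1,0;0,-1] * A⁻¹`, whose entries are
`1 + 2bc/m`, `-2ab/m`, `2cd/m`, `1 - 2ad/m`, has integer entries, then `m ∣ 2`
(so `|m| ∈ {1, 2}`). -/
theorem stmt_13 (a b c d : ℤ) (ha : Int.gcd a c = 1) (hb : Int.gcd b d = 1)
    (m : ℤ) (hm : m = a * d - b * c) (hm0 : m ≠ 0)
    (h1 : m ∣ 2 * b * c) (h2 : m ∣ 2 * a * b) (h3 : m ∣ 2 * c * d) (h4 : m ∣ 2 * a * d) :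
    m ∣ 2 :=
  stmt_13_general a b c d ha hb m h1 h2 h3 h4
end

section
/- Let $f \in GL(2,\mathbb{Z})$ be an involution ($f^2 = I$, $f \neq \pm I$) with eigenvalues $1$ and $-1$, let $\mu : \mathbb{Z}^2 \to \mathbb{Z}$ be a surjective-onto-$m_L\mathbb{Z}$ linear functional with $\mu \circ f = \mu$, let $\eta_f$ be a primitive vector spanning $\mathrm{Fix}(f) = \{v : f v = v\}$ with $\mu(\eta_f) > 0$, and let $\sigma$ be a primitive vector with $\mu(\sigma) = 0$. Then $m_f := \mu(\eta_f)/m_L$ satisfies $m_f \in \{1, 2\}$, and moreover $m_f = |\det A|$ where $A$ is the matrix with columns $\eta_f$ and $\sigma$. -/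
/-!
In rank two, `μ(σ) = 0` forces `μ(η) σ = det A · (-n₁, n₀)`; comparing the contents of both
sides gives `μ(η) = m_L |det A|` for primitive `σ`. On the other hand every `v + f v` is fixed
by the involution `f`, hence a multiple of `η`, and `μ(v + f v) = 2 μ(v)` because `μ ∘ f = μ`;
taking `μ(v) = m_L` shows `μ(η) ∣ 2 m_L`, i.e. `|det A| ∣ 2`.
-/

open Matrix

section Involution

variable {ι R : Type*} [Fintype ι] [CommRing R]

theorem mulVec_mulVec_add_self_of_mul_self_eq_one [DecidableEq ι] {f : Matrix ι ι R}
    (hf : f * f = 1) (v : ι → R) : f *ᵥ (f *ᵥ v + v) = f *ᵥ v + v := by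
  rw [mulVec_add, mulVec_mulVec, hf, one_mulVec, add_comm]

theorem dotProduct_mulVec_add_self {f : Matrix ι ι R} {n : ι → R}
    (hn : ∀ v, n ⬝ᵥ f *ᵥ v = n ⬝ᵥ v) (v : ι → R) : n ⬝ᵥ (f *ᵥ v + v) = 2 * (n ⬝ᵥ v) := by
  rw [dotProduct_add, hn, two_mul]

theorem dotProduct_dvd_two_mul_of_mul_self_eq_one [DecidableEq ι] {f : Matrix ι ι R}
    {n η : ι → R} (hf : f * f = 1) (hn : ∀ v, n ⬝ᵥ f *ᵥ v = n ⬝ᵥ v)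
    (hη : ∀ w, f *ᵥ w = w → ∃ t : R, w = t • η) (v : ι → R) :
    n ⬝ᵥ η ∣ 2 * (n ⬝ᵥ v) := by
  obtain ⟨t, ht⟩ := hη _ (mulVec_mulVec_add_self_of_mul_self_eq_one hf v)
  refine ⟨t, ?_⟩
  rw [← dotProduct_mulVec_add_self hn, ht, dotProduct_smul, smul_eq_mul, mul_comm]

end Involution

section RankTwo

theorem vec2_dotProduct_smul_eq_det_smul {R : Type*} [CommRing R] {n σ : Fin 2 → R}
    (hσ : n ⬝ᵥ σ = 0) (η : Fin 2 → R) :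
    (n ⬝ᵥ η) • σ = (!![η 0, σ 0; η 1, σ 1]).det • ![-n 1, n 0] := by
  rw [vec2_dotProduct] at hσ ⊢
  refine funext (Fin.forall_fin_two.2 ⟨?_, ?_⟩) <;>
    simp only [Pi.smul_apply, smul_eq_mul, det_fin_two_of, cons_val_zero, cons_val_one]
  · linear_combination (η 0) * hσ
  · linear_combination (η 1) * hσ

theorem natAbs_vec2_dotProduct_mul_gcd {n σ : Fin 2 → ℤ} (hσ : n ⬝ᵥ σ = 0) (η : Fin 2 → ℤ) :
    (n ⬝ᵥ η).natAbs * Int.gcd (σ 0) (σ 1)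
      = (!![η 0, σ 0; η 1, σ 1]).det.natAbs * Int.gcd (n 0) (n 1) := by
  have h := congrFun (vec2_dotProduct_smul_eq_det_smul hσ η)
  have h0 := h 0
  have h1 := h 1
  simp only [Pi.smul_apply, smul_eq_mul, cons_val_zero, cons_val_one] at h0 h1
  rw [← Int.gcd_mul_left, h0, h1, Int.gcd_mul_left, Int.neg_gcd, Int.gcd_comm]

theorem exists_vec2_dotProduct_eq_gcd (n : Fin 2 → ℤ) :
    ∃ v : Fin 2 → ℤ, n ⬝ᵥ v = Int.gcd (n 0) (n 1) :=
  ⟨![Int.gcdA (n 0) (n 1), Int.gcdB (n 0) (n 1)], by rw [vec2_dotProduct, Int.gcd_eq_gcd_ab]; rfl⟩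

end RankTwo

theorem stmt_14_general (f : Matrix (Fin 2) (Fin 2) ℤ) (hf2 : f * f = 1)
    (n : Fin 2 → ℤ) (mL : ℕ)
    (himg : Int.gcd (n 0) (n 1) = mL)
    (hμf : ∀ v : Fin 2 → ℤ, n 0 * (f.mulVec v 0) + n 1 * (f.mulVec v 1)
      = n 0 * v 0 + n 1 * v 1)
    (η σ : Fin 2 → ℤ)
    (hηspan : ∀ v : Fin 2 → ℤ, f.mulVec v = v → ∃ t : ℤ, v = t • η)
    (hηpos : 0 < n 0 * η 0 + n 1 * η 1)
    (hσprim : Int.gcd (σ 0) (σ 1) = 1)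
    (hσ : n 0 * σ 0 + n 1 * σ 1 = 0) :
    (n 0 * η 0 + n 1 * η 1 = mL ∨ n 0 * η 0 + n 1 * η 1 = 2 * mL) ∧
      n 0 * η 0 + n 1 * η 1
        = (mL : ℤ) * ((!![η 0, σ 0; η 1, σ 1] : Matrix (Fin 2) (Fin 2) ℤ).det.natAbs) := by
  simp only [← vec2_dotProduct] at hμf hηpos hσ ⊢
  set d := (!![η 0, σ 0; η 1, σ 1] : Matrix (Fin 2) (Fin 2) ℤ).det
  have hM : n ⬝ᵥ η = mL * d.natAbs := by
    have h := natAbs_vec2_dotProduct_mul_gcd hσ η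
    rw [hσprim, himg, mul_one, mul_comm] at h
    rw [← Int.natAbs_of_nonneg hηpos.le, h, Nat.cast_mul]
  refine ⟨?_, hM⟩
  obtain ⟨v, hv⟩ := exists_vec2_dotProduct_eq_gcd n
  have hdvd := dotProduct_dvd_two_mul_of_mul_self_eq_one hf2 hμf hηspan v
  rw [hv, himg, hM, mul_comm 2] at hdvd
  have hmL : 0 < mL := by
    rw [Nat.pos_iff_ne_zero]; rintro rfl; simp [hM] at hηpos
  have hd2 : d.natAbs ∣ 2 := by exact_mod_cast Int.dvd_of_mul_dvd_mul_left (by omega) hdvd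
  rcases (Nat.dvd_prime Nat.prime_two).1 hd2 with h | h <;> simp [hM, h, mul_comm]

/-- let `f ∈ GL(2,ℤ)` be an involution (`f² = I`, `f ≠ ±I`, hence with
eigenvalues `1` and `-1`), `μ(v) = n 0 * v 0 + n 1 * v 1` a linear functional with image
`m_L ℤ` (`m_L ≥ 1`) satisfying `μ ∘ f = μ`; let `η_f` be the primitive vector spanning
`Fix(f)` with `μ(η_f) > 0` and `σ` a primitive vector with `μ(σ) = 0`. Then
`m_f = μ(η_f)/m_L ∈ {1, 2}`, and `m_f = |det A|` where `A` has columns `η_f` and `σ`. -/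
theorem stmt_14 (f : Matrix (Fin 2) (Fin 2) ℤ) (hf2 : f * f = 1) (hf1 : f ≠ 1)
    (hfneg : f ≠ -1)
    (n : Fin 2 → ℤ) (mL : ℕ) (hmL : 1 ≤ mL)
    (himg : Int.gcd (n 0) (n 1) = mL)
    (hμf : ∀ v : Fin 2 → ℤ, n 0 * (f.mulVec v 0) + n 1 * (f.mulVec v 1)
      = n 0 * v 0 + n 1 * v 1)
    (η σ : Fin 2 → ℤ)
    (hηprim : Int.gcd (η 0) (η 1) = 1)
    (hηfix : f.mulVec η = η)
    (hηspan : ∀ v : Fin 2 → ℤ, f.mulVec v = v → ∃ t : ℤ, v = t • η)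
    (hηpos : 0 < n 0 * η 0 + n 1 * η 1)
    (hσprim : Int.gcd (σ 0) (σ 1) = 1)
    (hσ : n 0 * σ 0 + n 1 * σ 1 = 0) :
    (n 0 * η 0 + n 1 * η 1 = mL ∨ n 0 * η 0 + n 1 * η 1 = 2 * mL) ∧
      n 0 * η 0 + n 1 * η 1
        = (mL : ℤ) * ((!![η 0, σ 0; η 1, σ 1] : Matrix (Fin 2) (Fin 2) ℤ).det.natAbs) :=
  stmt_14_general f hf2 n mL himg hμf η σ hηspan hηpos hσprim hσ
end
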